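/- arXiv:2402.02631 — 3 statements merged into one kernel-verified Lean document; each statement's English description precedes it below -/
import Mathlib

section
/- Aliasing lemma: Let H be a b × n Boolean matrix with b < n, where matrix-vector products over Booleans are computed with AND as multiplication and OR as addition. Let f : {0,1}^n → ℝ with Möbius transform F, and define u : {0,1}^b → ℝ by u(ℓ) = f(¬(Hᵀ(¬ℓ))), where ¬ denotes componentwise negation. Then the Möbius transform U of u satisfies U(j) = ∑_{k : Hk = j} F(k) for all j ∈ {0,1}^b. -/
open Finset

/-- Hamming weight of a Boolean vector. -/
def wt {n : ℕ} (x : Fin n → Bool) : ℕ := (univ.filter fun i => x i = true).card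

/-- The forward Möbius transform `F(k) = ∑_{m ≤ k} (-1)^{|k|-|m|} f(m)`. -/
noncomputable def mobius {n : ℕ} (f : (Fin n → Bool) → ℝ) (k : Fin n → Bool) : ℝ :=
  ∑ m ∈ univ.filter (fun m => ∀ i, m i ≤ k i), (-1 : ℝ) ^ (wt k - wt m) * f m

/-- Boolean matrix-vector product with AND as multiplication and OR as addition. -/
def bmul {b n : ℕ} (H : Fin b → Fin n → Bool) (k : Fin n → Bool) : Fin b → Bool :=
  fun i => decide (∃ j, H i j = true ∧ k j = true)

/- ------------------ auxiliary lemmas ------------------ -/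

lemma ble {a c : Bool} (h : a ≤ c) (ha : a = true) : c = true := by
  subst ha
  cases c
  · exact absurd h (by decide)
  · rfl

lemma wt_le {n : ℕ} {y m : Fin n → Bool} (h : ∀ i, y i ≤ m i) : wt y ≤ wt m := by
  apply card_le_card
  intro i hi
  simp only [mem_filter, mem_univ, true_and] at hi ⊢
  exact ble (h i) hi

lemma neg_one_pow_sub (a b : ℕ) (h : b ≤ a) :
    (-1 : ℝ) ^ (a - b) = (-1) ^ a * (-1) ^ b := by
  have h2 : a + b = (a - b) + 2 * b := by omega
  rw [← pow_add, h2, pow_add, pow_mul, neg_one_sq, one_pow, mul_one]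

lemma wt_split {n : ℕ} (j m : Fin n → Bool) (hjm : ∀ i, j i ≤ m i) :
    wt m = wt j + (univ.filter (fun i => m i = true ∧ j i = false)).card := by
  unfold wt
  rw [← card_union_of_disjoint]
  · congr 1
    ext i
    simp only [mem_union, mem_filter, mem_univ, true_and]
    constructor
    · intro h
      by_cases hj : j i = true
      · exact Or.inl hj
      · exact Or.inr ⟨h, by simpa using hj⟩
    · rintro (h | ⟨h, _⟩)
      · exact ble (hjm i) h
      · exact h
  · rw [disjoint_left]
    intro a ha hb
    simp only [mem_filter, mem_univ, true_and] at ha hb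
    rw [ha] at hb
    exact absurd hb.2 (by simp)

/-- The key alternating sum over the interval `[j, k]`. -/
lemma alt_sum {n : ℕ} (j k : Fin n → Bool) (hjk : ∀ i, j i ≤ k i) :
    ∑ m ∈ univ.filter (fun m => (∀ i, j i ≤ m i) ∧ ∀ i, m i ≤ k i), (-1 : ℝ) ^ (wt m)
      = if j = k then (-1 : ℝ) ^ (wt j) else 0 := by
  classical
  set D : Finset (Fin n) := univ.filter (fun i => k i = true ∧ j i = false) with hD
  have key : ∑ m ∈ univ.filter (fun m => (∀ i, j i ≤ m i) ∧ ∀ i, m i ≤ k i),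
      (-1 : ℝ) ^ (wt m) = ∑ S ∈ D.powerset, (-1 : ℝ) ^ (wt j + S.card) := by
    apply Finset.sum_nbij' (i := fun m => univ.filter (fun i => m i = true ∧ j i = false))
      (j := fun S => fun i => j i || decide (i ∈ S))
    · intro m hm
      simp only [mem_filter, mem_univ, true_and] at hm
      rw [mem_powerset]
      intro i hi
      simp only [mem_filter, mem_univ, true_and, hD] at hi ⊢
      exact ⟨ble (hm.2 i) hi.1, hi.2⟩
    · intro S hS
      rw [mem_powerset] at hS
      simp only [mem_filter, mem_univ, true_and]
      constructor
      · intro i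
        cases hji : j i <;> simp
      · intro i
        cases hji : j i with
        | true => simp [hji, ble (hjk i) hji]
        | false =>
          simp only [hji, Bool.false_or]
          by_cases hiS : i ∈ S
          · have := hS hiS
            simp only [mem_filter, mem_univ, true_and, hD] at this
            simp [hiS, this.1]
          · simp [hiS]
    · intro m hm
      simp only [mem_filter, mem_univ, true_and] at hm
      funext i
      cases hji : j i with
      | true => simp [ble (hm.1 i) hji]
      | false => simp [hji]
    · intro S hS
      rw [mem_powerset] at hS
      ext i
      simp only [mem_filter, mem_univ, true_and]
      constructor
      · rintro ⟨h1, h2⟩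
        simp only [h2, Bool.false_or, decide_eq_true_eq] at h1
        exact h1
      · intro hiS
        have := hS hiS
        simp only [mem_filter, mem_univ, true_and, hD] at this
        simp [hiS, this.2]
    · intro m hm
      simp only [mem_filter, mem_univ, true_and] at hm
      rw [wt_split j m hm.1]
  rw [key]
  have : ∑ S ∈ D.powerset, (-1 : ℝ) ^ (wt j + S.card)
      = (-1 : ℝ) ^ (wt j) * ∑ S ∈ D.powerset, (-1 : ℝ) ^ S.card := by
    rw [mul_sum]
    exact Finset.sum_congr rfl fun S _ => by rw [pow_add]
  rw [this]
  have hz : ∑ S ∈ D.powerset, (-1 : ℝ) ^ S.card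
      = ((∑ S ∈ D.powerset, (-1 : ℤ) ^ S.card : ℤ) : ℝ) := by push_cast; rfl
  rw [hz, Finset.sum_powerset_neg_one_pow_card]
  have hDe : (D = ∅) ↔ j = k := by
    constructor
    · intro h
      funext i
      have : i ∉ D := by rw [h]; simp
      simp only [mem_filter, mem_univ, true_and, hD, not_and] at this
      cases hji : j i with
      | true => exact (ble (hjk i) hji).symm
      | false =>
        cases hki : k i with
        | false => rfl
        | true => exact absurd hji (by simpa using this hki)
    · intro h
      subst h
      rw [eq_empty_iff_forall_notMem]
      intro i hi
      simp only [hD, mem_filter, mem_univ, true_and] at hi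
      exact absurd hi.1 (by simp [hi.2])
  by_cases hcase : j = k
  · rw [if_pos hcase, if_pos (hDe.2 hcase)]
    norm_num
  · rw [if_neg hcase, if_neg (fun h => hcase (hDe.1 h))]
    norm_num

/-- Swapping the order of summation in nested down-set sums. -/
lemma swap_core {n : ℕ} (x : Fin n → Bool) (φ : (Fin n → Bool) → (Fin n → Bool) → ℝ) :
    ∑ m ∈ univ.filter (fun m => ∀ i, m i ≤ x i),
        ∑ y ∈ univ.filter (fun y => ∀ i, y i ≤ m i), φ m y
      = ∑ y ∈ univ.filter (fun y => ∀ i, y i ≤ x i),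
          ∑ m ∈ univ.filter (fun m => (∀ i, y i ≤ m i) ∧ ∀ i, m i ≤ x i), φ m y := by
  classical
  have L : ∑ m ∈ univ.filter (fun m => ∀ i, m i ≤ x i),
        ∑ y ∈ univ.filter (fun y => ∀ i, y i ≤ m i), φ m y
      = ∑ m ∈ (univ : Finset (Fin n → Bool)), ∑ y ∈ (univ : Finset (Fin n → Bool)),
          (if (∀ i, y i ≤ m i) ∧ (∀ i, m i ≤ x i) then φ m y else 0) := by
    rw [Finset.sum_filter]
    apply Finset.sum_congr rfl
    intro m _
    by_cases h1 : ∀ i, m i ≤ x i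
    · rw [if_pos h1, Finset.sum_filter]
      apply Finset.sum_congr rfl
      intro y _
      by_cases h2 : ∀ i, y i ≤ m i <;> simp [h1, h2]
    · rw [if_neg h1]
      symm
      apply Finset.sum_eq_zero
      intro y _
      simp [h1]
  have R : ∑ y ∈ univ.filter (fun y => ∀ i, y i ≤ x i),
        ∑ m ∈ univ.filter (fun m => (∀ i, y i ≤ m i) ∧ ∀ i, m i ≤ x i), φ m y
      = ∑ y ∈ (univ : Finset (Fin n → Bool)), ∑ m ∈ (univ : Finset (Fin n → Bool)),
          (if (∀ i, y i ≤ m i) ∧ (∀ i, m i ≤ x i) then φ m y else 0) := by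
    rw [Finset.sum_filter]
    apply Finset.sum_congr rfl
    intro y _
    by_cases hy : ∀ i, y i ≤ x i
    · rw [if_pos hy, Finset.sum_filter]
    · rw [if_neg hy]
      symm
      apply Finset.sum_eq_zero
      intro m _
      by_cases h2 : ∀ i, y i ≤ m i
      · by_cases h1 : ∀ i, m i ≤ x i
        · exact absurd (fun i => le_trans (h2 i) (h1 i)) hy
        · simp [h1]
      · simp [h2]
  rw [L, R, Finset.sum_comm]

/-- Inverse Möbius transform: `g(x) = ∑_{m ≤ x} (mobius g)(m)`. -/
lemma mobius_inv {n : ℕ} (g : (Fin n → Bool) → ℝ) (x : Fin n → Bool) :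
    g x = ∑ m ∈ univ.filter (fun m => ∀ i, m i ≤ x i), mobius g m := by
  classical
  have h1 : ∑ m ∈ univ.filter (fun m => ∀ i, m i ≤ x i), mobius g m
      = ∑ m ∈ univ.filter (fun m => ∀ i, m i ≤ x i),
          ∑ y ∈ univ.filter (fun y => ∀ i, y i ≤ m i),
            (-1 : ℝ) ^ (wt m) * ((-1 : ℝ) ^ (wt y) * g y) := by
    apply Finset.sum_congr rfl
    intro m _
    unfold mobius
    apply Finset.sum_congr rfl
    intro y hy
    simp only [mem_filter, mem_univ, true_and] at hy
    rw [neg_one_pow_sub _ _ (wt_le hy), mul_assoc]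
  rw [h1, swap_core]
  have h2 : ∀ y ∈ univ.filter (fun y => ∀ i, y i ≤ x i),
      ∑ m ∈ univ.filter (fun m => (∀ i, y i ≤ m i) ∧ ∀ i, m i ≤ x i),
          (-1 : ℝ) ^ (wt m) * ((-1 : ℝ) ^ (wt y) * g y)
        = (if y = x then (-1 : ℝ) ^ (wt y) else 0) * ((-1 : ℝ) ^ (wt y) * g y) := by
    intro y hy
    simp only [mem_filter, mem_univ, true_and] at hy
    rw [← Finset.sum_mul, alt_sum y x hy]
  rw [Finset.sum_congr rfl h2]
  simp only [ite_mul, zero_mul]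
  rw [Finset.sum_ite_eq' (univ.filter (fun y => ∀ i, y i ≤ x i)) x
    (fun y => (-1 : ℝ) ^ (wt y) * ((-1 : ℝ) ^ (wt y) * g y))]
  rw [if_pos (by simp)]
  rw [← mul_assoc, ← pow_add, ← two_mul, pow_mul, neg_one_sq, one_pow, one_mul]

/-- Uniqueness: if `g` is the inverse transform of `V` then `mobius g = V`. -/
lemma mobius_eq {n : ℕ} (V g : (Fin n → Bool) → ℝ)
    (hg : ∀ ℓ, g ℓ = ∑ j ∈ univ.filter (fun j => ∀ i, j i ≤ ℓ i), V j)
    (k : Fin n → Bool) : mobius g k = V k := by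
  classical
  unfold mobius
  have h1 : ∑ m ∈ univ.filter (fun m => ∀ i, m i ≤ k i), (-1 : ℝ) ^ (wt k - wt m) * g m
      = ∑ m ∈ univ.filter (fun m => ∀ i, m i ≤ k i),
          ∑ y ∈ univ.filter (fun y => ∀ i, y i ≤ m i),
            (-1 : ℝ) ^ (wt m) * ((-1 : ℝ) ^ (wt k) * V y) := by
    apply Finset.sum_congr rfl
    intro m hm
    simp only [mem_filter, mem_univ, true_and] at hm
    rw [hg m, neg_one_pow_sub _ _ (wt_le hm), Finset.mul_sum]
    apply Finset.sum_congr rfl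
    intro y _
    ring
  rw [h1, swap_core]
  have h2 : ∀ y ∈ univ.filter (fun y => ∀ i, y i ≤ k i),
      ∑ m ∈ univ.filter (fun m => (∀ i, y i ≤ m i) ∧ ∀ i, m i ≤ k i),
          (-1 : ℝ) ^ (wt m) * ((-1 : ℝ) ^ (wt k) * V y)
        = (if y = k then (-1 : ℝ) ^ (wt y) else 0) * ((-1 : ℝ) ^ (wt k) * V y) := by
    intro y hy
    simp only [mem_filter, mem_univ, true_and] at hy
    rw [← Finset.sum_mul, alt_sum y k hy]
  rw [Finset.sum_congr rfl h2]
  simp only [ite_mul, zero_mul]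
  rw [Finset.sum_ite_eq' (univ.filter (fun y => ∀ i, y i ≤ k i)) k
    (fun y => (-1 : ℝ) ^ (wt y) * ((-1 : ℝ) ^ (wt k) * V y))]
  rw [if_pos (by simp)]
  rw [← mul_assoc, ← pow_add, ← two_mul, pow_mul, neg_one_sq, one_pow, one_mul]

/-- `m ≤ ¬(Hᵀ(¬ℓ))` iff `Hm ≤ ℓ`. -/
lemma key_equiv {b n : ℕ} (H : Fin b → Fin n → Bool) (m : Fin n → Bool) (ℓ : Fin b → Bool) :
    (∀ q, m q ≤ !(decide (∃ i, H i q = true ∧ ℓ i = false)))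
      ↔ (∀ i, bmul H m i ≤ ℓ i) := by
  constructor
  · intro h i
    cases hbi : bmul H m i with
    | false => simp
    | true =>
      simp only [bmul, decide_eq_true_eq] at hbi
      obtain ⟨q, hq, hm⟩ := hbi
      have hq2 := h q
      rw [hm] at hq2
      have hne : ¬ ∃ i', H i' q = true ∧ ℓ i' = false := by
        intro hex
        rw [decide_eq_true hex] at hq2
        exact absurd hq2 (by decide)
      cases hl : ℓ i with
      | true => exact le_refl _
      | false => exact absurd ⟨i, hq, hl⟩ hne
  · intro h q
    cases hm : m q with
    | false => simp
    | true =>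
      have hne : ¬ ∃ i, H i q = true ∧ ℓ i = false := by
        rintro ⟨i, hiq, hl⟩
        have hb : bmul H m i = true := by
          simp only [bmul, decide_eq_true_eq]
          exact ⟨q, hiq, hm⟩
        have hi2 := h i
        rw [hb, hl] at hi2
        exact absurd hi2 (by decide)
      rw [decide_eq_false hne]
      exact le_refl _

/-- Aliasing lemma: subsampling `u(ℓ) = f(¬(Hᵀ(¬ℓ)))` gives a Möbius transform
`U(j) = ∑_{k : Hk = j} F(k)`. -/
theorem aliasing (b n : ℕ) (hbn : b < n) (H : Fin b → Fin n → Bool)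
    (f : (Fin n → Bool) → ℝ) (F : (Fin n → Bool) → ℝ)
    (hF : ∀ k, F k = mobius f k)
    (u : (Fin b → Bool) → ℝ)
    (hu : ∀ ℓ, u ℓ = f (fun j => !(decide (∃ i, H i j = true ∧ ℓ i = false))))
    (U : (Fin b → Bool) → ℝ)
    (hU : ∀ j, U j = mobius u j) :
    ∀ j, U j = ∑ k ∈ univ.filter (fun k => bmul H k = j), F k := by
  classical
  intro j
  rw [hU]
  apply mobius_eq (fun j => ∑ k ∈ univ.filter (fun k => bmul H k = j), F k) u
  intro ℓ
  set T : Fin n → Bool := fun q => !(decide (∃ i, H i q = true ∧ ℓ i = false)) with hT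
  rw [hu ℓ]
  have huT : f (fun q => !(decide (∃ i, H i q = true ∧ ℓ i = false))) = f T := rfl
  rw [huT, mobius_inv f T]
  have hmaps : ∀ m ∈ univ.filter (fun m => ∀ q, m q ≤ T q), bmul H m ∈
      univ.filter (fun j => ∀ i, j i ≤ ℓ i) := by
    intro m hm
    simp only [mem_filter, mem_univ, true_and] at hm ⊢
    exact (key_equiv H m ℓ).1 hm
  rw [← Finset.sum_fiberwise_of_maps_to hmaps (fun m => mobius f m)]
  apply Finset.sum_congr rfl
  intro j' hj'
  simp only [mem_filter, mem_univ, true_and] at hj'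
  have hset : (univ.filter (fun m => ∀ q, m q ≤ T q)).filter (fun m => bmul H m = j')
      = univ.filter (fun k => bmul H k = j') := by
    ext m
    simp only [mem_filter, mem_univ, true_and]
    constructor
    · exact fun h => h.2
    · intro h
      refine ⟨(key_equiv H m ℓ).2 ?_, h⟩
      rw [h]
      exact hj'
  rw [hset]
  apply Finset.sum_congr rfl
  intro m _
  exact (hF m).symm
end

section
/- If H is the b × n Boolean matrix whose rows are the unit vectors e_{i_1}, …, e_{i_b} for distinct indices i_1, …, i_b ∈ [n] (identity on a coordinate subset I), then for f : {0,1}^n → ℝ with Möbius transform F, the subsampled function u(ℓ) = f(¬(Hᵀ(¬ℓ))) has Möbius transform U(j) = ∑_{k : k_{i_s} = j_s for all s ∈ [b]} F(k). In particular, each aliasing set {k : Hk = j} has cardinality exactly 2^{n-b}. -/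
open Finset

lemma wt_eq_sum {n : ℕ} (x : Fin n → Bool) :
    wt x = ∑ i, (if x i = true then 1 else 0) := by
  rw [wt, Finset.card_filter]

lemma sign_interval_k {n : ℕ} (l k : Fin n → Bool) :
    ∑ m ∈ univ.filter (fun m : Fin n → Bool => (∀ i, l i ≤ m i) ∧ (∀ i, m i ≤ k i)),
      (-1:ℝ)^(wt k - wt m) = if l = k then (if ∀ i, l i ≤ k i then 1 else 0) else 0 := by
  have hset : univ.filter (fun m : Fin n → Bool => (∀ i, l i ≤ m i) ∧ (∀ i, m i ≤ k i))
      = Fintype.piFinset (fun i => univ.filter fun x => l i ≤ x ∧ x ≤ k i) := by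
    ext m; simp [Fintype.mem_piFinset, forall_and]
  rw [hset]
  have hpt : ∀ m ∈ Fintype.piFinset (fun i => univ.filter fun x : Bool => l i ≤ x ∧ x ≤ k i),
      (-1:ℝ)^(wt k - wt m)
        = ∏ i, (-1:ℝ)^((if k i = true then 1 else 0) - (if m i = true then 1 else 0)) := by
    intro m hm
    simp only [Fintype.mem_piFinset, mem_filter, mem_univ, true_and] at hm
    rw [Finset.prod_pow_eq_pow_sum, wt_eq_sum, wt_eq_sum, Finset.sum_tsub_distrib]
    intro i _
    have := (hm i).2
    cases hmi : m i <;> cases hki : k i <;> simp_all [Bool.le_iff_imp]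
  rw [Finset.sum_congr rfl hpt,
    ← Finset.prod_univ_sum (fun i => univ.filter fun x : Bool => l i ≤ x ∧ x ≤ k i)
      (fun i x => (-1:ℝ)^((if k i = true then 1 else 0) - (if x = true then 1 else 0)))]
  have hco : ∀ i : Fin n, ∑ x ∈ univ.filter (fun x : Bool => l i ≤ x ∧ x ≤ k i),
      (-1:ℝ)^((if k i = true then 1 else 0) - (if x = true then 1 else 0))
      = if (l i = k i ∧ l i ≤ k i) then 1 else 0 := by
    intro i
    cases hl : l i <;> cases hk : k i <;>
      simp_all [Finset.sum_filter, Bool.le_iff_imp] <;> decide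
  rw [Finset.prod_congr rfl (fun i _ => hco i), Finset.prod_boole]
  simp only [funext_iff]
  split_ifs <;> simp_all

lemma sign_interval_l {n : ℕ} (l k : Fin n → Bool) :
    ∑ m ∈ univ.filter (fun m : Fin n → Bool => (∀ i, l i ≤ m i) ∧ (∀ i, m i ≤ k i)),
      (-1:ℝ)^(wt m - wt l) = if l = k then (if ∀ i, l i ≤ k i then 1 else 0) else 0 := by
  have hset : univ.filter (fun m : Fin n → Bool => (∀ i, l i ≤ m i) ∧ (∀ i, m i ≤ k i))
      = Fintype.piFinset (fun i => univ.filter fun x => l i ≤ x ∧ x ≤ k i) := by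
    ext m; simp [Fintype.mem_piFinset, forall_and]
  rw [hset]
  have hpt : ∀ m ∈ Fintype.piFinset (fun i => univ.filter fun x : Bool => l i ≤ x ∧ x ≤ k i),
      (-1:ℝ)^(wt m - wt l)
        = ∏ i, (-1:ℝ)^((if m i = true then 1 else 0) - (if l i = true then 1 else 0)) := by
    intro m hm
    simp only [Fintype.mem_piFinset, mem_filter, mem_univ, true_and] at hm
    rw [Finset.prod_pow_eq_pow_sum, wt_eq_sum, wt_eq_sum, Finset.sum_tsub_distrib]
    intro i _
    have := (hm i).1
    cases hmi : m i <;> cases hli : l i <;> simp_all [Bool.le_iff_imp]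
  rw [Finset.sum_congr rfl hpt,
    ← Finset.prod_univ_sum (fun i => univ.filter fun x : Bool => l i ≤ x ∧ x ≤ k i)
      (fun i x => (-1:ℝ)^((if x = true then 1 else 0) - (if l i = true then 1 else 0)))]
  have hco : ∀ i : Fin n, ∑ x ∈ univ.filter (fun x : Bool => l i ≤ x ∧ x ≤ k i),
      (-1:ℝ)^((if x = true then 1 else 0) - (if l i = true then 1 else 0))
      = if (l i = k i ∧ l i ≤ k i) then 1 else 0 := by
    intro i
    cases hl : l i <;> cases hk : k i <;>
      simp_all [Finset.sum_filter, Bool.le_iff_imp] <;> decide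
  rw [Finset.prod_congr rfl (fun i _ => hco i), Finset.prod_boole]
  simp only [funext_iff]
  split_ifs <;> simp_all

lemma zeta_mobius {n : ℕ} (f : (Fin n → Bool) → ℝ) (k : Fin n → Bool) :
    ∑ m ∈ univ.filter (fun m : Fin n → Bool => ∀ i, m i ≤ k i), mobius f m = f k := by
  calc ∑ m ∈ univ.filter (fun m : Fin n → Bool => ∀ i, m i ≤ k i), mobius f m
      = ∑ m : Fin n → Bool, ∑ l : Fin n → Bool,
          if (∀ i, l i ≤ m i) ∧ (∀ i, m i ≤ k i) then (-1:ℝ)^(wt m - wt l) * f l else 0 := by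
        rw [Finset.sum_filter]
        refine Finset.sum_congr rfl fun m _ => ?_
        by_cases h : ∀ i, m i ≤ k i
        · simp [h, mobius, Finset.sum_filter]
        · simp [h]
    _ = ∑ l : Fin n → Bool, ∑ m : Fin n → Bool,
          if (∀ i, l i ≤ m i) ∧ (∀ i, m i ≤ k i) then (-1:ℝ)^(wt m - wt l) * f l else 0 :=
        Finset.sum_comm
    _ = ∑ l : Fin n → Bool,
          (∑ m ∈ univ.filter (fun m : Fin n → Bool => (∀ i, l i ≤ m i) ∧ (∀ i, m i ≤ k i)),
            (-1:ℝ)^(wt m - wt l)) * f l := by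
        refine Finset.sum_congr rfl fun l _ => ?_
        rw [Finset.sum_mul, Finset.sum_filter]
    _ = f k := by
        simp only [sign_interval_l]
        simp [ite_mul]

lemma mobius_zeta {n : ℕ} (v : (Fin n → Bool) → ℝ) (k : Fin n → Bool) :
    mobius (fun m => ∑ l ∈ univ.filter (fun l : Fin n → Bool => ∀ i, l i ≤ m i), v l) k
      = v k := by
  calc mobius (fun m => ∑ l ∈ univ.filter (fun l : Fin n → Bool => ∀ i, l i ≤ m i), v l) k
      = ∑ m : Fin n → Bool, ∑ l : Fin n → Bool,
          if (∀ i, l i ≤ m i) ∧ (∀ i, m i ≤ k i) then (-1:ℝ)^(wt k - wt m) * v l else 0 := by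
        rw [mobius, Finset.sum_filter]
        refine Finset.sum_congr rfl fun m _ => ?_
        by_cases h : ∀ i, m i ≤ k i
        · simp [h, Finset.sum_filter, Finset.mul_sum, mul_ite]
        · simp [h]
    _ = ∑ l : Fin n → Bool, ∑ m : Fin n → Bool,
          if (∀ i, l i ≤ m i) ∧ (∀ i, m i ≤ k i) then (-1:ℝ)^(wt k - wt m) * v l else 0 :=
        Finset.sum_comm
    _ = ∑ l : Fin n → Bool,
          (∑ m ∈ univ.filter (fun m : Fin n → Bool => (∀ i, l i ≤ m i) ∧ (∀ i, m i ≤ k i)),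
            (-1:ℝ)^(wt k - wt m)) * v l := by
        refine Finset.sum_congr rfl fun l _ => ?_
        rw [Finset.sum_mul, Finset.sum_filter]
    _ = v k := by
        simp only [sign_interval_k]
        simp [ite_mul]

/-- main -/
theorem aliasing_unit_rows (b n : ℕ) (ι : Fin b → Fin n) (hι : Function.Injective ι)
    (H : Fin b → Fin n → Bool) (hH : ∀ s j, H s j = decide (j = ι s))
    (f : (Fin n → Bool) → ℝ) (F : (Fin n → Bool) → ℝ)
    (hF : ∀ k, F k = mobius f k)
    (u : (Fin b → Bool) → ℝ)
    (hu : ∀ ℓ, u ℓ = f (fun j => !(decide (∃ i, H i j = true ∧ ℓ i = false))))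
    (U : (Fin b → Bool) → ℝ)
    (hU : ∀ j, U j = mobius u j) :
    (∀ j, U j = ∑ k ∈ univ.filter (fun k : Fin n → Bool => ∀ s, k (ι s) = j s), F k) ∧
    (∀ j : Fin b → Bool, (univ.filter (fun k : Fin n → Bool => bmul H k = j)).card
        = 2 ^ (n - b)) := by
  -- the subsampling map
  set g : (Fin b → Bool) → (Fin n → Bool) :=
    fun ℓ j => !(decide (∃ i, H i j = true ∧ ℓ i = false)) with hg
  have hg_apply : ∀ (ℓ : Fin b → Bool) (s : Fin b), g ℓ (ι s) = ℓ s := by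
    intro ℓ s
    have : (∃ i, H i (ι s) = true ∧ ℓ i = false) ↔ ℓ s = false := by
      constructor
      · rintro ⟨i, hi1, hi2⟩
        simp only [hH, decide_eq_true_eq] at hi1
        rw [hι hi1]; exact hi2
      · intro h; exact ⟨s, by simp [hH], h⟩
    simp only [hg, this]
    cases hls : ℓ s <;> simp
  have hg_out : ∀ (ℓ : Fin b → Bool) (j : Fin n), (∀ s, ι s ≠ j) → g ℓ j = true := by
    intro ℓ j hj
    simp only [hg, Bool.not_eq_true', decide_eq_false_iff_not]
    rintro ⟨i, hi1, _⟩
    simp only [hH, decide_eq_true_eq] at hi1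
    exact hj i hi1.symm
  have hle : ∀ (ℓ : Fin b → Bool) (m : Fin n → Bool),
      (∀ j, m j ≤ g ℓ j) ↔ (∀ s, m (ι s) ≤ ℓ s) := by
    intro ℓ m
    constructor
    · intro h s; have := h (ι s); rwa [hg_apply] at this
    · intro h j
      by_cases hj : ∃ s, ι s = j
      · obtain ⟨s, rfl⟩ := hj; rw [hg_apply]; exact h s
      · rw [hg_out ℓ j (fun s hs => hj ⟨s, hs⟩)]; exact Bool.le_true _
  -- V : the aliased transform
  set V : (Fin b → Bool) → ℝ :=
    fun p => ∑ k ∈ univ.filter (fun k : Fin n → Bool => ∀ s, k (ι s) = p s), F k with hV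
  have hu' : ∀ ℓ, u ℓ = ∑ p ∈ univ.filter (fun p : Fin b → Bool => ∀ i, p i ≤ ℓ i), V p := by
    intro ℓ
    rw [hu ℓ]
    have h1 : f (g ℓ) = ∑ m ∈ univ.filter (fun m : Fin n → Bool => ∀ s, m (ι s) ≤ ℓ s), F m := by
      rw [← zeta_mobius f (g ℓ)]
      have hs : univ.filter (fun m : Fin n → Bool => ∀ s, m (ι s) ≤ ℓ s)
          = univ.filter (fun m : Fin n → Bool => ∀ i, m i ≤ g ℓ i) := by
        ext m; simp only [mem_filter, mem_univ, true_and]; exact (hle ℓ m).symm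
      rw [hs]
      exact Finset.sum_congr rfl fun m _ => (hF m).symm
    rw [show f (fun j => !(decide (∃ i, H i j = true ∧ ℓ i = false))) = f (g ℓ) from rfl, h1]
    -- group by fibers
    rw [← Finset.sum_fiberwise_of_maps_to (g := fun m : Fin n → Bool => fun s => m (ι s))
      (t := univ.filter (fun p : Fin b → Bool => ∀ i, p i ≤ ℓ i))
      (fun m hm => by
        simp only [mem_filter, mem_univ, true_and] at hm ⊢
        exact hm)]
    refine Finset.sum_congr rfl fun p hp => ?_
    simp only [mem_filter, mem_univ, true_and] at hp
    rw [hV]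
    refine Finset.sum_congr ?_ (fun _ _ => rfl)
    ext m
    simp only [mem_filter, mem_univ, true_and, funext_iff]
    constructor
    · rintro ⟨_, h2⟩; exact h2
    · intro h2; exact ⟨fun s => (h2 s) ▸ hp s, h2⟩
  constructor
  · intro j
    rw [hU j, show u = (fun ℓ => ∑ p ∈ univ.filter (fun p : Fin b → Bool => ∀ i, p i ≤ ℓ i), V p)
      from funext hu', mobius_zeta]
  · intro j
    -- the filter set rewrites to the coordinate-condition set
    have hbm : ∀ k : Fin n → Bool, bmul H k = j ↔ ∀ s, k (ι s) = j s := by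
      intro k
      rw [funext_iff]
      refine forall_congr' fun s => ?_
      have hb : bmul H k s = k (ι s) := by
        simp [bmul, hH]
      rw [hb]
    -- choose representative values
    have hbn : b ≤ n := Fintype.card_fin b ▸ Fintype.card_fin n ▸ Fintype.card_le_of_injective ι hι
    classical
    set σ : Fin n → Bool := fun i => if h : ∃ s, ι s = i then j h.choose else false with hσ
    have hσι : ∀ s, σ (ι s) = j s := by
      intro s
      have h : ∃ t, ι t = ι s := ⟨s, rfl⟩
      have := h.choose_spec
      simp only [hσ, dif_pos h]
      rw [hι this]
    set t : Fin n → Finset Bool := fun i => if ∃ s, ι s = i then {σ i} else Finset.univ with ht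
    have hset : univ.filter (fun k : Fin n → Bool => bmul H k = j) = Fintype.piFinset t := by
      ext k
      simp only [mem_filter, mem_univ, true_and, Fintype.mem_piFinset, hbm]
      constructor
      · intro h i
        simp only [ht]
        split_ifs with hi
        · obtain ⟨s, rfl⟩ := hi
          simp [h s, hσι s]
        · simp
      · intro h s
        have hmem := h (ι s)
        simp only [ht] at hmem
        rw [if_pos (⟨s, rfl⟩ : ∃ t, ι t = ι s), mem_singleton] at hmem
        rw [hmem, hσι]
    rw [hset, Fintype.card_piFinset]
    have hcard : ∀ i, (t i).card = if ∃ s, ι s = i then 1 else 2 := by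
      intro i
      simp only [ht]
      split_ifs <;> simp
    rw [Finset.prod_congr rfl fun i _ => hcard i]
    rw [Finset.prod_ite, Finset.prod_const, Finset.prod_const, one_pow, one_mul]
    have himg : univ.filter (fun i : Fin n => ∃ s, ι s = i) = univ.image ι := by
      ext i; simp [eq_comm]
    have hb' : (univ.filter (fun i : Fin n => ∃ s, ι s = i)).card = b := by
      rw [himg, Finset.card_image_of_injective _ hι, Finset.card_univ, Fintype.card_fin]
    have hsum := Finset.card_filter_add_card_filter_not
      (s := (univ : Finset (Fin n))) (p := fun i => ∃ s, ι s = i)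
    rw [Finset.card_univ, Fintype.card_fin] at hsum
    have : (univ.filter (fun i : Fin n => ¬∃ s, ι s = i)).card = n - b := by omega
    rw [this]
end

section
/- Let k ∈ {0,1}^n with nonzero Möbius coefficient F(k) being the unique nonzero coefficient in the aliasing set {k' : Hk' = j} (a singleton). For a delay vector d ∈ {0,1}^n, define U_d(j) = ∑_{k' ≤ ¬d, Hk' = j} F(k'). Then U_d(j) = F(k) if d ∧ k = 0 (componentwise AND is zero), and U_d(j) = 0 otherwise. Consequently, 1 − U_d(j)/U_0(j) equals the Boolean inner product d·k (OR of componentwise ANDs). -/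
open Finset

/-- Delayed aliased coefficient: `U_d(j) = ∑_{k' ≤ ¬d, Hk' = j} F(k')`. -/
noncomputable def Ud {b n : ℕ} (H : Fin b → Fin n → Bool) (F : (Fin n → Bool) → ℝ)
    (j : Fin b → Bool) (d : Fin n → Bool) : ℝ :=
  ∑ k' ∈ univ.filter (fun k' : Fin n → Bool => (∀ i, k' i ≤ !(d i)) ∧ bmul H k' = j), F k'

/-- For a singleton bin with unique nonzero coefficient `F(k)`, the delayed
observation equals `F(k)` iff `d ∧ k = 0`, and the ratio statistic recovers the
Boolean inner product `d·k`. -/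
theorem singleton_delay (b n : ℕ) (H : Fin b → Fin n → Bool)
    (F : (Fin n → Bool) → ℝ) (j : Fin b → Bool) (k : Fin n → Bool)
    (hk : bmul H k = j) (hF : F k ≠ 0)
    (huniq : ∀ k', bmul H k' = j → k' ≠ k → F k' = 0) :
    ∀ d : Fin n → Bool,
      (Ud H F j d = if (∀ i, (d i && k i) = false) then F k else 0) ∧
      (1 - Ud H F j d / Ud H F j (fun _ => false)
        = if (∃ i, d i = true ∧ k i = true) then 1 else 0) := by
  have main : ∀ d : Fin n → Bool,
      Ud H F j d = if (∀ i, (d i && k i) = false) then F k else 0 := by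
    intro d
    unfold Ud
    by_cases h : ∀ i, (d i && k i) = false
    · rw [if_pos h]
      apply Finset.sum_eq_single_of_mem
      · simp only [mem_filter, mem_univ, true_and]
        refine ⟨fun i => ?_, hk⟩
        cases hki : k i
        · simp
        · have := h i
          rw [hki] at this
          simp_all
      · intro k' hk' hne
        simp only [mem_filter] at hk'
        exact huniq k' hk'.2.2 hne
    · rw [if_neg h]
      apply Finset.sum_eq_zero
      intro k' hk'
      simp only [mem_filter, mem_univ, true_and] at hk'
      apply huniq k' hk'.2
      rintro rfl
      apply h
      intro i
      have := hk'.1 i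
      cases hdi : d i
      · simp
      · rw [hdi] at this
        simpa using le_antisymm (by simpa using this) (Bool.false_le _)
  intro d
  refine ⟨main d, ?_⟩
  have h0 : Ud H F j (fun _ => false) = F k := by
    rw [main]; simp
  rw [h0, main d]
  by_cases h : ∀ i, (d i && k i) = false
  · rw [if_pos h, if_neg]
    · field_simp; norm_num
    · rintro ⟨i, hdi, hki⟩
      have := h i; rw [hdi, hki] at this; simp at this
  · rw [if_neg h, if_pos]
    · simp
    · push_neg at h
      obtain ⟨i, hi⟩ := h
      exact ⟨i, by revert hi; cases d i <;> cases k i <;> simp⟩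
end
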